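/- Let H be a Hopf algebra with invertible antipode S, λ : H^op → k a linear map satisfying λ(1) = 1, λ(h)λ(l) = Σ λ(h₁)λ(h₂ ·_op l), and Σ λ(h₁)h₂ = Σ h₁λ(h₂). Then the map h ⇀ a = Σ S(h₁)a h₃ λ(h₂) defines a left partial action of H^op on H, making H a left partial H^op-module algebra. -/

import Mathlib

open TensorProduct LinearMap

namespace PartialHopf

variable (k : Type*) [Field k]
variable (H : Type*) [Ring H] [HopfAlgebra k H]

/-- The bilinear map `u ⊗ v ↦ (a ↦ u * a * v)`. -/
noncomputable def sandwich : H ⊗[k] H →ₗ[k] H →ₗ[k] H :=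
  TensorProduct.lift
    ((LinearMap.compl₂ ((LinearMap.llcomp k H H H) ∘ₗ (LinearMap.mul k H).flip)
        (LinearMap.mul k H)).flip)

/-- `h ↦ Σ λ(h₂) • S(h₁) ⊗ h₃`. -/
noncomputable def gMap (lam : H →ₗ[k] k) : H →ₗ[k] H ⊗[k] H :=
  (LinearMap.rTensor H
      ((TensorProduct.rid k H).toLinearMap
        ∘ₗ (TensorProduct.map (HopfAlgebra.antipode (R := k)) lam)))
    ∘ₗ (LinearMap.rTensor H (Coalgebra.comul (R := k))) ∘ₗ (Coalgebra.comul (R := k))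

/-- The twisted adjoint partial action `h ⇀ a = Σ S(h₁) a h₃ λ(h₂)` of `H^op` on `H`. -/
noncomputable def twistedAdjoint (lam : H →ₗ[k] k) : H →ₗ[k] H →ₗ[k] H :=
  (sandwich k H) ∘ₗ (gMap k H lam)

variable {H}

/-- `H` is a left partial `H^op`-module algebra via `act`: this is the notion of
`IsPartialAction` for the Hopf algebra `H^op` (same comultiplication and unit as `H`, and
opposite multiplication, so that `h₂ ·_op g = g * h₂`). -/
structure IsPartialActionOp (act : H →ₗ[k] H →ₗ[k] H) : Prop where
  one_act : ∀ a : H, act 1 a = a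
  act_mul : ∀ (h a b : H), act h (a * b)
      = LinearMap.mul' k H
          ((TensorProduct.map (act.flip a) (act.flip b)) (Coalgebra.comul (R := k) h))
  act_act : ∀ (h g a : H), act h (act g a)
      = LinearMap.mul' k H
          ((TensorProduct.map (act.flip 1) ((act.flip a) ∘ₗ (LinearMap.mulLeft k g)))
            (Coalgebra.comul (R := k) h))

section Tools
open Coalgebra HopfAlgebra
variable {k} {lam : H →ₗ[k] k}

local notation "ε" => Coalgebra.counit (R := k) (A := H)
local notation "S" => HopfAlgebra.antipode (R := k) (A := H)

lemma sandwich_tmul (u v a : H) : sandwich k H (u ⊗ₜ v) a = u * a * v := rfl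

/-- convolution product on `H →ₗ[k] H` -/
noncomputable def conv (f g : H →ₗ[k] H) : H →ₗ[k] H :=
  LinearMap.mul' k H ∘ₗ (TensorProduct.map f g) ∘ₗ Coalgebra.comul

lemma conv_apply_repr {ι : Type*} (f g : H →ₗ[k] H) {x : H} (r : Coalgebra.Repr k x ι) :
    conv f g x = ∑ i ∈ r.index, f (r.left i) * g (r.right i) := by
  simp only [conv, comp_apply, ← r.eq, map_sum, TensorProduct.map_tmul, mul'_apply]

lemma conv_apply_one (f g : H →ₗ[k] H) : conv f g 1 = f 1 * g 1 := by
  simp [conv, Algebra.TensorProduct.one_def]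

lemma antipode_one' : S 1 = (1 : H) := by
  have := HopfAlgebra.mul_antipode_rTensor_comul_apply (R := k) (a := (1:H))
  simpa [Algebra.TensorProduct.one_def] using this


lemma sum_counit_smul {B : Type*} [AddCommMonoid B] [Module k B] {ι : Type*} {a : H}
    (r : Coalgebra.Repr k a ι) (f : H →ₗ[k] B) :
    ∑ i ∈ r.index, ε (r.left i) • f (r.right i) = f a := by
  have := Coalgebra.sum_counit_tmul_map_eq (R := k) f a (repr := r)
  have h2 := congrArg (TensorProduct.lid k B) this
  simp only [map_sum, TensorProduct.lid_tmul, one_smul] at h2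
  exact h2

lemma sum_smul_counit {B : Type*} [AddCommMonoid B] [Module k B] {ι : Type*} {a : H}
    (r : Coalgebra.Repr k a ι) (f : H →ₗ[k] B) :
    ∑ i ∈ r.index, ε (r.right i) • f (r.left i) = f a := by
  have := Coalgebra.sum_map_tmul_counit_eq (R := k) f a (repr := r)
  have h2 := congrArg (TensorProduct.rid k B) this
  simp only [map_sum, TensorProduct.rid_tmul, one_smul] at h2
  exact h2

lemma sum_mul3_eq {ι κ Λ : Type*} {x : H} (r : Coalgebra.Repr k x ι)
    (r1 : ∀ i : ι, Coalgebra.Repr k (r.left i) κ)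
    (r2 : ∀ i : ι, Coalgebra.Repr k (r.right i) Λ) (f g h : H →ₗ[k] H) :
    ∑ i ∈ r.index, ∑ j ∈ (r1 i).index,
        f ((r1 i).left j) * (g ((r1 i).right j) * h (r.right i))
      = ∑ i ∈ r.index, ∑ j ∈ (r2 i).index,
        f (r.left i) * (g ((r2 i).left j) * h ((r2 i).right j)) := by
  have := Coalgebra.sum_map_tmul_tmul_eq (R := k) f g h x (repr := r) (a₁ := r1) (a₂ := r2)
  apply_fun (LinearMap.mul' k H ∘ₗ LinearMap.lTensor H (LinearMap.mul' k H)) at this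
  simpa [map_sum] using this.symm

lemma conv_assoc (f g h : H →ₗ[k] H) : conv (conv f g) h = conv f (conv g h) := by
  ext x
  have r := Coalgebra.Repr.arbitrary k x
  rw [conv_apply_repr (conv f g) h r, conv_apply_repr f (conv g h) r]
  calc ∑ i ∈ r.index, conv f g (r.left i) * h (r.right i)
      = ∑ i ∈ r.index, ∑ j ∈ (Coalgebra.Repr.arbitrary k (r.left i)).index,
          f ((Coalgebra.Repr.arbitrary k (r.left i)).left j) *
            (g ((Coalgebra.Repr.arbitrary k (r.left i)).right j) * h (r.right i)) := by
        refine Finset.sum_congr rfl fun i _ => ?_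
        rw [conv_apply_repr f g (Coalgebra.Repr.arbitrary k (r.left i)), Finset.sum_mul]
        simp [mul_assoc]
    _ = ∑ i ∈ r.index, ∑ j ∈ (Coalgebra.Repr.arbitrary k (r.right i)).index,
          f (r.left i) * (g ((Coalgebra.Repr.arbitrary k (r.right i)).left j) *
            h ((Coalgebra.Repr.arbitrary k (r.right i)).right j)) :=
        sum_mul3_eq r _ _ f g h
    _ = ∑ i ∈ r.index, f (r.left i) * conv g h (r.right i) := by
        refine Finset.sum_congr rfl fun i _ => ?_
        rw [conv_apply_repr g h (Coalgebra.Repr.arbitrary k (r.right i)), Finset.mul_sum]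

/-- a `Repr` for a product, built from `Repr`s of the factors. -/
def mulRepr {ι₁ ι₂ : Type*} {x y : H} (rx : Coalgebra.Repr k x ι₁) (ry : Coalgebra.Repr k y ι₂) :
    Coalgebra.Repr k (x * y) (ι₁ × ι₂) where
  index := rx.index ×ˢ ry.index
  left p := rx.left p.1 * ry.left p.2
  right p := rx.right p.1 * ry.right p.2
  eq := by
    rw [Bialgebra.comul_mul, ← rx.eq, ← ry.eq, Finset.sum_mul_sum, Finset.sum_product]
    simp [Algebra.TensorProduct.tmul_mul_tmul]

lemma sum2_antipode {ι₁ ι₂ : Type*} (x y : H) (rx : Coalgebra.Repr k x ι₁) (ry : Coalgebra.Repr k y ι₂) :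
    ∑ i ∈ rx.index, ∑ j ∈ ry.index,
      (rx.left i * ry.left j) * S (rx.right i * ry.right j) = (ε x * ε y) • (1 : H) := by
  have := HopfAlgebra.sum_mul_antipode_eq_smul (R := k) (mulRepr rx ry)
  rw [Bialgebra.counit_mul] at this
  rw [← Finset.sum_product']
  exact this

@[simp] lemma mulRepr_index {ι₁ ι₂ : Type*} {x y : H} (rx : Coalgebra.Repr k x ι₁) (ry : Coalgebra.Repr k y ι₂) :
    (mulRepr rx ry).index = rx.index ×ˢ ry.index := rfl
@[simp] lemma mulRepr_left {ι₁ ι₂ : Type*} {x y : H} (rx : Coalgebra.Repr k x ι₁) (ry : Coalgebra.Repr k y ι₂)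
    (p : ι₁ × ι₂) : (mulRepr rx ry).left p = rx.left p.1 * ry.left p.2 := rfl
@[simp] lemma mulRepr_right {ι₁ ι₂ : Type*} {x y : H} (rx : Coalgebra.Repr k x ι₁) (ry : Coalgebra.Repr k y ι₂)
    (p : ι₁ × ι₂) : (mulRepr rx ry).right p = rx.right p.1 * ry.right p.2 := rfl

lemma sum_mulRepr {β : Type*} [AddCommMonoid β] {ι₁ ι₂ : Type*} {x y : H} (rx : Coalgebra.Repr k x ι₁)
    (ry : Coalgebra.Repr k y ι₂) (f : ι₁ × ι₂ → β) :
    ∑ p ∈ (mulRepr rx ry).index, f p = ∑ i ∈ rx.index, ∑ j ∈ ry.index, f (i, j) :=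
  Finset.sum_product rx.index ry.index f

lemma antipode_mul (a b : H) : S (a * b) = S b * S a := by
  have ra : Coalgebra.Repr k a (H × H) := Coalgebra.Repr.arbitrary k a
  have rb : Coalgebra.Repr k b (H × H) := Coalgebra.Repr.arbitrary k b
  have raR : ∀ i : H × H, Coalgebra.Repr k (ra.right i) (H × H) := fun i => Coalgebra.Repr.arbitrary k _
  have raL : ∀ i : H × H, Coalgebra.Repr k (ra.left i) (H × H) := fun i => Coalgebra.Repr.arbitrary k _
  have rbR : ∀ i : H × H, Coalgebra.Repr k (rb.right i) (H × H) := fun i => Coalgebra.Repr.arbitrary k _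
  have rbL : ∀ i : H × H, Coalgebra.Repr k (rb.left i) (H × H) := fun i => Coalgebra.Repr.arbitrary k _
  set M : H := ∑ ib ∈ rb.index, ∑ ia ∈ ra.index, ∑ ja ∈ (raR ia).index, ∑ jb ∈ (rbR ib).index,
      S (rb.left ib) * (S (ra.left ia) *
        (((raR ia).left ja * (rbR ib).left jb) * S ((raR ia).right ja * (rbR ib).right jb)))
    with hM
  have way1 : M = S b * S a := by
    have step1 : M = ∑ ib ∈ rb.index, ∑ ia ∈ ra.index,
        (ε (ra.right ia) * ε (rb.right ib)) • (S (rb.left ib) * S (ra.left ia)) := by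
      rw [hM]
      refine Finset.sum_congr rfl fun ib _ => Finset.sum_congr rfl fun ia _ => ?_
      simp only [← Finset.mul_sum]
      rw [sum2_antipode (ra.right ia) (rb.right ib) (raR ia) (rbR ib)]
      simp [mul_smul_comm]
    rw [step1]
    have step2 : (∑ ib ∈ rb.index, ε (rb.right ib) • S (rb.left ib)) *
        (∑ ia ∈ ra.index, ε (ra.right ia) • S (ra.left ia))
        = ∑ ib ∈ rb.index, ∑ ia ∈ ra.index,
          (ε (ra.right ia) * ε (rb.right ib)) • (S (rb.left ib) * S (ra.left ia)) := by
      rw [Finset.sum_mul_sum]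
      refine Finset.sum_congr rfl fun ib _ => Finset.sum_congr rfl fun ia _ => ?_
      simp [smul_mul_assoc, mul_smul_comm, smul_smul, mul_comm]
    rw [← step2, sum_smul_counit rb (HopfAlgebra.antipode k), sum_smul_counit ra (HopfAlgebra.antipode k)]
  have way2 : M = S (a * b) := by
    -- reorder the sums: bring `jb` in front of `ia, ja`
    have reorder : M = ∑ ib ∈ rb.index, ∑ jb ∈ (rbR ib).index, ∑ ia ∈ ra.index,
        ∑ ja ∈ (raR ia).index,
        S (rb.left ib) * (S (ra.left ia) *
          (((raR ia).left ja * (rbR ib).left jb) * S ((raR ia).right ja * (rbR ib).right jb))) := by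
      rw [hM]
      refine Finset.sum_congr rfl fun ib _ => ?_
      exact (Finset.sum_congr rfl fun ia _ => Finset.sum_comm).trans Finset.sum_comm
    rw [reorder]
    -- convert the `a`-part to the left-nested representation and collapse `S a₁ * a₂`
    have stepB : ∀ ib ∈ rb.index, ∀ jb ∈ (rbR ib).index,
        (∑ ia ∈ ra.index, ∑ ja ∈ (raR ia).index,
          S (rb.left ib) * (S (ra.left ia) *
            (((raR ia).left ja * (rbR ib).left jb) *
              S ((raR ia).right ja * (rbR ib).right jb))))
        = S (rb.left ib) * ((rbR ib).left jb * S (a * (rbR ib).right jb)) := by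
      intro ib _ jb _
      have E := sum_mul3_eq ra raL raR
        (LinearMap.mulLeft k (S (rb.left ib)) ∘ₗ (HopfAlgebra.antipode k))
        (LinearMap.mulRight k ((rbR ib).left jb))
        ((HopfAlgebra.antipode k) ∘ₗ LinearMap.mulRight k ((rbR ib).right jb))
      simp only [LinearMap.comp_apply, LinearMap.mulLeft_apply, LinearMap.mulRight_apply] at E
      have E' : (∑ ia ∈ ra.index, ∑ ja ∈ (raR ia).index,
          S (rb.left ib) * (S (ra.left ia) *
            (((raR ia).left ja * (rbR ib).left jb) *
              S ((raR ia).right ja * (rbR ib).right jb))))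
          = ∑ ia ∈ ra.index, ∑ ja ∈ (raL ia).index,
            S (rb.left ib) * ((S ((raL ia).left ja) * (raL ia).right ja) *
              ((rbR ib).left jb * S (ra.right ia * (rbR ib).right jb))) := by
        refine (Finset.sum_congr rfl fun ia _ => Finset.sum_congr rfl fun ja _ =>
            (by simp only [mul_assoc] : _ = _)).trans
          (E.symm.trans (Finset.sum_congr rfl fun ia _ => Finset.sum_congr rfl fun ja _ =>
            (by simp only [mul_assoc] : _ = _)))
      rw [E']
      have coll : ∀ ia ∈ ra.index,
          (∑ ja ∈ (raL ia).index,
            S (rb.left ib) * ((S ((raL ia).left ja) * (raL ia).right ja) *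
              ((rbR ib).left jb * S (ra.right ia * (rbR ib).right jb))))
          = ε (ra.left ia) • (S (rb.left ib) *
              ((rbR ib).left jb * S (ra.right ia * (rbR ib).right jb))) := by
        intro ia _
        simp only [← Finset.sum_mul, ← Finset.mul_sum]
        rw [HopfAlgebra.sum_antipode_mul_eq_smul (raL ia)]
        simp [smul_mul_assoc, mul_smul_comm]
      rw [Finset.sum_congr rfl coll]
      have := sum_counit_smul ra (LinearMap.mulLeft k (S (rb.left ib)) ∘ₗ
        LinearMap.mulLeft k ((rbR ib).left jb) ∘ₗ (HopfAlgebra.antipode k) ∘ₗ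
        LinearMap.mulRight k ((rbR ib).right jb))
      simpa only [LinearMap.comp_apply, LinearMap.mulLeft_apply, LinearMap.mulRight_apply]
        using this
    rw [Finset.sum_congr rfl fun ib hib => Finset.sum_congr rfl fun jb hjb => stepB ib hib jb hjb]
    -- convert the `b`-part to the left-nested representation and collapse `S b₁ * b₂`
    have E := sum_mul3_eq rb rbL rbR (HopfAlgebra.antipode k) LinearMap.id
      ((HopfAlgebra.antipode k) ∘ₗ LinearMap.mulLeft k a)
    simp only [LinearMap.comp_apply, LinearMap.mulLeft_apply, LinearMap.id_apply] at E
    rw [← E]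
    have coll2 : ∀ ib ∈ rb.index,
        (∑ jb ∈ (rbL ib).index,
          S ((rbL ib).left jb) * ((rbL ib).right jb * S (a * rb.right ib)))
        = ε (rb.left ib) • S (a * rb.right ib) := by
      intro ib _
      simp only [← mul_assoc, ← Finset.sum_mul]
      rw [HopfAlgebra.sum_antipode_mul_eq_smul (rbL ib)]
      simp [smul_mul_assoc]
    rw [Finset.sum_congr rfl coll2]
    have := sum_counit_smul rb ((HopfAlgebra.antipode k) ∘ₗ LinearMap.mulLeft k a)
    simpa only [LinearMap.comp_apply, LinearMap.mulLeft_apply] using this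
  exact way2.symm.trans way1

/-- `h ↦ ε h • a` -/
noncomputable def cc (a : H) : H →ₗ[k] H := (Coalgebra.counit (R := k) (A := H)).smulRight a

@[simp] lemma cc_apply (a x : H) : cc (k := k) a x = ε x • a := rfl

lemma conv_cc_left (a : H) (f : H →ₗ[k] H) :
    conv (cc a) f = LinearMap.mulLeft k a ∘ₗ f := by
  ext x
  have r := Coalgebra.Repr.arbitrary k x
  have hs := sum_counit_smul r (LinearMap.mulLeft k a ∘ₗ f)
  simp only [LinearMap.comp_apply, LinearMap.mulLeft_apply] at hs ⊢
  rw [conv_apply_repr _ _ r, ← hs]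
  exact Finset.sum_congr rfl fun i _ => by simp [smul_mul_assoc]

lemma conv_cc_right (a : H) (f : H →ₗ[k] H) :
    conv f (cc a) = LinearMap.mulRight k a ∘ₗ f := by
  ext x
  have r := Coalgebra.Repr.arbitrary k x
  have hs := sum_smul_counit r (LinearMap.mulRight k a ∘ₗ f)
  simp only [LinearMap.comp_apply, LinearMap.mulRight_apply] at hs ⊢
  rw [conv_apply_repr _ _ r, ← hs]
  exact Finset.sum_congr rfl fun i _ => by simp [mul_smul_comm]

lemma conv_cc_one_left (f : H →ₗ[k] H) : conv (cc 1) f = f := by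
  rw [conv_cc_left, LinearMap.mulLeft_one, LinearMap.id_comp]

lemma conv_antipode_id : conv (S) LinearMap.id = cc (1 : H) := by
  ext x
  rw [conv_apply_repr _ _ (Coalgebra.Repr.arbitrary k x), cc_apply]
  simpa using HopfAlgebra.sum_antipode_mul_eq_smul (R := k) (Coalgebra.Repr.arbitrary k x)

lemma conv_id_antipode : conv LinearMap.id (S) = cc (1 : H) := by
  ext x
  rw [conv_apply_repr _ _ (Coalgebra.Repr.arbitrary k x), cc_apply]
  simpa using HopfAlgebra.sum_mul_antipode_eq_smul (R := k) (Coalgebra.Repr.arbitrary k x)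

lemma conv_sum_right {ι : Type*} (s : Finset ι) (f : H →ₗ[k] H) (g : ι → H →ₗ[k] H) :
    conv f (∑ i ∈ s, g i) = ∑ i ∈ s, conv f (g i) := by
  ext x
  have r := Coalgebra.Repr.arbitrary k x
  rw [conv_apply_repr _ _ r, LinearMap.sum_apply]
  simp only [conv_apply_repr _ _ r, LinearMap.sum_apply, Finset.mul_sum]
  exact Finset.sum_comm

lemma conv_smul_right (c : k) (f g : H →ₗ[k] H) : conv f (c • g) = c • conv f g := by
  ext x
  have r := Coalgebra.Repr.arbitrary k x
  simp only [conv_apply_repr _ _ r, LinearMap.smul_apply, Finset.smul_sum, mul_smul_comm]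

lemma conv_mulRight_right (x : H) (f g : H →ₗ[k] H) :
    conv f (LinearMap.mulRight k x ∘ₗ g) = LinearMap.mulRight k x ∘ₗ conv f g := by
  ext h
  have r := Coalgebra.Repr.arbitrary k h
  simp only [LinearMap.comp_apply, conv_apply_repr _ _ r, LinearMap.mulRight_apply,
    Finset.sum_mul, mul_assoc]

lemma conv_smul_left (c : k) (f g : H →ₗ[k] H) : conv (c • f) g = c • conv f g := by
  ext x
  have r := Coalgebra.Repr.arbitrary k x
  simp only [conv_apply_repr _ _ r, LinearMap.smul_apply, Finset.smul_sum, smul_mul_assoc]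

lemma conv_sum_left {ι : Type*} (s : Finset ι) (f : ι → H →ₗ[k] H) (g : H →ₗ[k] H) :
    conv (∑ i ∈ s, f i) g = ∑ i ∈ s, conv (f i) g := by
  ext x
  have r := Coalgebra.Repr.arbitrary k x
  simp only [conv_apply_repr _ _ r, LinearMap.sum_apply, Finset.sum_mul]
  exact Finset.sum_comm

lemma cc_sum {ι : Type*} (s : Finset ι) (f : ι → H) :
    cc (k := k) (∑ i ∈ s, f i) = ∑ i ∈ s, cc (f i) := by
  ext x; simp [Finset.smul_sum]

lemma cc_smul (c : k) (x : H) : cc (k := k) (c • x) = c • cc x := by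
  ext y
  simp only [cc_apply, LinearMap.smul_apply]
  rw [smul_comm]

lemma mulRight_cc_one (x : H) : LinearMap.mulRight k x ∘ₗ cc 1 = cc x := by
  ext y; simp [smul_mul_assoc]

lemma conv_cc_cc (x y : H) (W : H →ₗ[k] H) :
    conv (cc x) (conv (cc y) W) = conv (cc (x * y)) W := by
  rw [conv_cc_left, conv_cc_left, conv_cc_left, ← LinearMap.comp_assoc, ← LinearMap.mulLeft_mul]

/-- `h ↦ lam h • 1` -/
noncomputable def LamM (lam : H →ₗ[k] k) : H →ₗ[k] H := lam.smulRight 1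

@[simp] lemma LamM_apply (lam : H →ₗ[k] k) (x : H) : LamM lam x = lam x • 1 := rfl

/-- `h ↦ lam (x * h) • 1` -/
noncomputable def lmul (lam : H →ₗ[k] k) (x : H) : H →ₗ[k] H :=
  (lam ∘ₗ LinearMap.mulLeft k x).smulRight 1

@[simp] lemma lmul_apply (lam : H →ₗ[k] k) (x y : H) : lmul lam x y = lam (x * y) • 1 := rfl

lemma lmul_one (lam : H →ₗ[k] k) : lmul lam 1 = LamM lam := by
  unfold lmul LamM
  rw [LinearMap.mulLeft_one, LinearMap.comp_id]

lemma conv_lamM_id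
    (hl3 : ∀ h : H,
      (TensorProduct.lid k H) ((LinearMap.rTensor H lam) (Coalgebra.comul (R := k) h))
        = (TensorProduct.rid k H) ((LinearMap.lTensor H lam) (Coalgebra.comul (R := k) h))) :
    conv (LamM lam) LinearMap.id = conv LinearMap.id (LamM lam) := by
  ext x
  have r := Coalgebra.Repr.arbitrary k x
  have h := hl3 x
  rw [← r.eq] at h
  simp only [map_sum, LinearMap.rTensor_tmul, LinearMap.lTensor_tmul, TensorProduct.lid_tmul,
    TensorProduct.rid_tmul] at h
  simp only [conv_apply_repr _ _ r, LamM_apply, LinearMap.id_apply, smul_mul_assoc,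
    mul_smul_comm, one_mul, mul_one]
  exact h

lemma conv_lamM_lmul
    (hl2 : ∀ h l : H,
      lam h * lam l
        = LinearMap.mul' k k
            ((TensorProduct.map lam (lam ∘ₗ LinearMap.mulLeft k l))
              (Coalgebra.comul (R := k) h)))
    (x : H) : conv (LamM lam) (lmul lam x) = lam x • LamM lam := by
  ext h
  have r := Coalgebra.Repr.arbitrary k h
  have h2 := hl2 h x
  rw [← r.eq] at h2
  simp only [map_sum, TensorProduct.map_tmul, LinearMap.mul'_apply, LinearMap.comp_apply,
    LinearMap.mulLeft_apply] at h2
  rw [conv_apply_repr _ _ r]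
  simp only [LamM_apply, lmul_apply, LinearMap.smul_apply, smul_mul_assoc, one_mul,
    smul_smul, ← Finset.sum_smul]
  rw [← h2, mul_comm (lam x)]

lemma conv_lamM_lamM
    (hl1 : lam 1 = 1)
    (hl2 : ∀ h l : H,
      lam h * lam l
        = LinearMap.mul' k k
            ((TensorProduct.map lam (lam ∘ₗ LinearMap.mulLeft k l))
              (Coalgebra.comul (R := k) h))) :
    conv (LamM lam) (LamM lam) = LamM lam := by
  have h := conv_lamM_lmul hl2 1
  rw [lmul_one, hl1, one_smul] at h
  exact h

lemma conv_lamM_cc (a : H) : conv (LamM lam) (cc a) = conv (cc a) (LamM lam) := by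
  rw [conv_cc_right, conv_cc_left]
  ext h
  simp [smul_mul_assoc, mul_smul_comm]

lemma cc_mulLeft_assoc (x y : H) :
    conv (cc x) (conv (LamM lam) (LinearMap.mulLeft k y))
      = conv (cc (x * y)) (conv (LamM lam) LinearMap.id) := by
  rw [conv_cc_left, conv_cc_left]
  ext h
  have r := Coalgebra.Repr.arbitrary k h
  simp only [LinearMap.comp_apply, LinearMap.mulLeft_apply, conv_apply_repr _ _ r,
    LamM_apply, LinearMap.id_apply, Finset.mul_sum, smul_mul_assoc, one_mul, mul_smul_comm]
  exact Finset.sum_congr rfl fun i _ => by rw [mul_assoc]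

lemma gMap_repr {ι κ : Type*} (h : H) (r : Coalgebra.Repr k h ι)
    (r1 : ∀ i : ι, Coalgebra.Repr k (r.left i) κ) :
    gMap k H lam h = ∑ i ∈ r.index, ∑ j ∈ (r1 i).index,
      lam ((r1 i).right j) • ((S ((r1 i).left j)) ⊗ₜ[k] r.right i) := by
  simp only [gMap, LinearMap.comp_apply, ← r.eq, map_sum, LinearMap.rTensor_tmul]
  refine Finset.sum_congr rfl fun i _ => ?_
  rw [← (r1 i).eq]
  simp [map_sum, TensorProduct.sum_tmul, TensorProduct.smul_tmul']

lemma act_apply_repr {ι κ : Type*} (a h : H) (r : Coalgebra.Repr k h ι)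
    (r1 : ∀ i : ι, Coalgebra.Repr k (r.left i) κ) :
    twistedAdjoint k H lam h a = ∑ i ∈ r.index, ∑ j ∈ (r1 i).index,
      lam ((r1 i).right j) • (S ((r1 i).left j) * a * r.right i) := by
  simp only [twistedAdjoint, LinearMap.comp_apply, gMap_repr h r r1, map_sum, map_smul,
    LinearMap.sum_apply, LinearMap.smul_apply, sandwich_tmul]

lemma act_flip_eq (a : H) : (twistedAdjoint k H lam).flip a =
    conv (conv (LinearMap.mulRight k a ∘ₗ (S)) (LamM lam)) LinearMap.id := by
  ext h
  have r := Coalgebra.Repr.arbitrary k h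
  have r1 : ∀ i : H × H, Coalgebra.Repr k (r.left i) (H × H) := fun i => Coalgebra.Repr.arbitrary k _
  rw [LinearMap.flip_apply, act_apply_repr a h r r1, conv_apply_repr _ _ r]
  refine Finset.sum_congr rfl fun i _ => ?_
  rw [conv_apply_repr _ _ (r1 i), Finset.sum_mul]
  exact Finset.sum_congr rfl fun j _ => by
    simp [mul_smul_comm, smul_mul_assoc, mul_assoc]

lemma act_flip_cc (a : H) : (twistedAdjoint k H lam).flip a =
    conv (conv (conv (S) (cc a)) (LamM lam)) LinearMap.id := by
  rw [act_flip_eq, conv_cc_right]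

lemma act_comp_mulLeft {ι κ : Type*} (a g : H) (rg : Coalgebra.Repr k g ι)
    (rg1 : ∀ i : ι, Coalgebra.Repr k (rg.left i) κ) :
    (twistedAdjoint k H lam).flip a ∘ₗ LinearMap.mulLeft k g
      = ∑ i ∈ rg.index, ∑ j ∈ (rg1 i).index,
        conv (LinearMap.mulRight k (S ((rg1 i).left j)) ∘ₗ (S))
          (conv (cc a) (conv (lmul lam ((rg1 i).right j))
            (LinearMap.mulLeft k (rg.right i)))) := by
  ext h
  have rh := Coalgebra.Repr.arbitrary k h
  have rh1 : ∀ p : H × H, Coalgebra.Repr k (rh.left p) (H × H) := fun p => Coalgebra.Repr.arbitrary k _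
  have rh2 : ∀ p : H × H, Coalgebra.Repr k (rh.right p) (H × H) := fun p => Coalgebra.Repr.arbitrary k _
  -- the canonical quadruple sum both sides are equal to
  set CAN : H := ∑ i ∈ rg.index, ∑ j ∈ (rg1 i).index, ∑ p ∈ rh.index, ∑ q ∈ (rh2 p).index,
      lam ((rg1 i).right j * (rh2 p).left q) •
        (S (rh.left p) * (S ((rg1 i).left j) * (a * (rg.right i * (rh2 p).right q))))
    with hCAN
  have hR : (∑ i ∈ rg.index, ∑ j ∈ (rg1 i).index,
      conv (LinearMap.mulRight k (S ((rg1 i).left j)) ∘ₗ (S))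
        (conv (cc a) (conv (lmul lam ((rg1 i).right j))
          (LinearMap.mulLeft k (rg.right i))))) h = CAN := by
    rw [hCAN]
    simp only [LinearMap.sum_apply]
    refine Finset.sum_congr rfl fun i _ => Finset.sum_congr rfl fun j _ => ?_
    rw [conv_cc_left, conv_apply_repr _ _ rh]
    refine Finset.sum_congr rfl fun p _ => ?_
    simp only [LinearMap.comp_apply, LinearMap.mulRight_apply, LinearMap.mulLeft_apply]
    rw [conv_apply_repr _ _ (rh2 p), Finset.mul_sum, Finset.mul_sum]
    refine Finset.sum_congr rfl fun q _ => ?_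
    simp [mul_assoc, mul_smul_comm, smul_mul_assoc]
  have hL : ((twistedAdjoint k H lam).flip a ∘ₗ LinearMap.mulLeft k g) h = CAN := by
    rw [LinearMap.comp_apply, LinearMap.mulLeft_apply, LinearMap.flip_apply,
      act_apply_repr a (g * h) (mulRepr rg rh) (fun p => mulRepr (rg1 p.1) (rh1 p.2))]
    rw [sum_mulRepr]
    simp only [sum_mulRepr, mulRepr_left, mulRepr_right, antipode_mul]
    -- reorder: bring the `j` sum before the `p` sum
    refine Eq.trans (Finset.sum_congr rfl fun i _ => Finset.sum_comm) ?_
    rw [hCAN]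
    refine Finset.sum_congr rfl fun i _ => Finset.sum_congr rfl fun j _ => ?_
    -- convert the `h`-nesting from left to right
    have E := sum_mul3_eq rh rh1 rh2
      (LinearMap.mulRight k (S ((rg1 i).left j)) ∘ₗ (S))
      (LinearMap.mulLeft k a ∘ₗ lmul lam ((rg1 i).right j))
      (LinearMap.mulLeft k (rg.right i))
    simp only [LinearMap.comp_apply, LinearMap.mulRight_apply, LinearMap.mulLeft_apply,
      lmul_apply] at E
    refine Eq.trans ?_ (E.trans ?_)
    · refine Finset.sum_congr rfl fun p _ => Finset.sum_congr rfl fun q _ => ?_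
      simp [mul_assoc, mul_smul_comm, smul_mul_assoc]
    · refine Finset.sum_congr rfl fun p _ => Finset.sum_congr rfl fun q _ => ?_
      simp [mul_assoc, mul_smul_comm, smul_mul_assoc]
  exact hL.trans hR.symm

lemma act_flip_one : (twistedAdjoint k H lam).flip 1 =
    conv (conv (S) (LamM lam)) LinearMap.id := by
  rw [act_flip_eq, LinearMap.mulRight_one, LinearMap.id_comp]

lemma key_mul
    (hl1 : lam 1 = 1)
    (hl2 : ∀ h l : H,
      lam h * lam l
        = LinearMap.mul' k k
            ((TensorProduct.map lam (lam ∘ₗ LinearMap.mulLeft k l))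
              (Coalgebra.comul (R := k) h)))
    (a b : H) :
    (twistedAdjoint k H lam).flip (a * b)
      = conv ((twistedAdjoint k H lam).flip a) ((twistedAdjoint k H lam).flip b) := by
  rw [act_flip_cc a, act_flip_cc b, act_flip_cc (a * b)]
  simp only [conv_assoc]
  rw [← conv_assoc LinearMap.id (S) (conv (cc b) (conv (LamM lam) LinearMap.id)),
      conv_id_antipode, conv_cc_one_left,
      ← conv_assoc (LamM lam) (cc b) (conv (LamM lam) LinearMap.id),
      conv_lamM_cc, conv_assoc,
      ← conv_assoc (LamM lam) (LamM lam) LinearMap.id, conv_lamM_lamM hl1 hl2,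
      conv_cc_cc]

lemma key_act
    (hl2 : ∀ h l : H,
      lam h * lam l
        = LinearMap.mul' k k
            ((TensorProduct.map lam (lam ∘ₗ LinearMap.mulLeft k l))
              (Coalgebra.comul (R := k) h)))
    (g a : H) :
    (twistedAdjoint k H lam).flip (twistedAdjoint k H lam g a)
      = conv ((twistedAdjoint k H lam).flip 1)
          ((twistedAdjoint k H lam).flip a ∘ₗ LinearMap.mulLeft k g) := by
  have rg := Coalgebra.Repr.arbitrary k g
  have rg1 : ∀ i : H × H, Coalgebra.Repr k (rg.left i) (H × H) := fun i => Coalgebra.Repr.arbitrary k _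
  have hR : conv ((twistedAdjoint k H lam).flip 1)
      ((twistedAdjoint k H lam).flip a ∘ₗ LinearMap.mulLeft k g)
      = ∑ i ∈ rg.index, ∑ j ∈ (rg1 i).index, lam ((rg1 i).right j) •
          conv (S) (conv (cc (S ((rg1 i).left j) * a * rg.right i))
            (conv (LamM lam) LinearMap.id)) := by
    rw [act_comp_mulLeft a g rg rg1, conv_sum_right]
    refine Finset.sum_congr rfl fun i _ => ?_
    rw [conv_sum_right]
    refine Finset.sum_congr rfl fun j _ => ?_
    rw [act_flip_one]
    simp only [conv_assoc]
    rw [← conv_assoc LinearMap.id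
          (LinearMap.mulRight k (S ((rg1 i).left j)) ∘ₗ (S))
          (conv (cc a) (conv (lmul lam ((rg1 i).right j))
            (LinearMap.mulLeft k (rg.right i)))),
        conv_mulRight_right, conv_id_antipode, mulRight_cc_one,
        ← conv_assoc (LamM lam) (cc (S ((rg1 i).left j)))
          (conv (cc a) (conv (lmul lam ((rg1 i).right j))
            (LinearMap.mulLeft k (rg.right i)))),
        conv_lamM_cc, conv_assoc,
        ← conv_assoc (LamM lam) (cc a)
          (conv (lmul lam ((rg1 i).right j)) (LinearMap.mulLeft k (rg.right i))),
        conv_lamM_cc, conv_assoc,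
        ← conv_assoc (LamM lam) (lmul lam ((rg1 i).right j))
          (LinearMap.mulLeft k (rg.right i)),
        conv_lamM_lmul hl2, conv_smul_left, conv_smul_right, conv_smul_right,
        conv_smul_right, conv_cc_cc, cc_mulLeft_assoc]
  have hL : (twistedAdjoint k H lam).flip (twistedAdjoint k H lam g a)
      = ∑ i ∈ rg.index, ∑ j ∈ (rg1 i).index, lam ((rg1 i).right j) •
          conv (S) (conv (cc (S ((rg1 i).left j) * a * rg.right i))
            (conv (LamM lam) LinearMap.id)) := by
    rw [act_flip_cc, conv_assoc, act_apply_repr a g rg rg1]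
    simp only [cc_sum, cc_smul, conv_sum_left, conv_smul_left, conv_sum_right, conv_smul_right,
      conv_assoc]
  rw [hL, hR]

end Tools

/-- Example 4.3: let `H` be a Hopf algebra with bijective antipode `S` and
`λ : H^op → k` linear with `λ(1) = 1`, `λ(h)λ(l) = Σ λ(h₁)λ(h₂ ·_op l)` and
`Σ λ(h₁)h₂ = Σ h₁λ(h₂)`.  Then `h ⇀ a = Σ S(h₁) a h₃ λ(h₂)` is a left partial action of
`H^op` on `H`, i.e. `H` is a left partial `H^op`-module algebra. -/
theorem twistedAdjoint_isPartialActionOp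
    (hS : Function.Bijective (HopfAlgebra.antipode (R := k) (A := H)))
    (lam : H →ₗ[k] k)
    (hl1 : lam 1 = 1)
    (hl2 : ∀ h l : H,
      lam h * lam l
        = LinearMap.mul' k k
            ((TensorProduct.map lam (lam ∘ₗ LinearMap.mulLeft k l))
              (Coalgebra.comul (R := k) h)))
    (hl3 : ∀ h : H,
      (TensorProduct.lid k H) ((LinearMap.rTensor H lam) (Coalgebra.comul (R := k) h))
        = (TensorProduct.rid k H) ((LinearMap.lTensor H lam) (Coalgebra.comul (R := k) h))) :
    IsPartialActionOp k (twistedAdjoint k H lam) := by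
  refine ⟨?_, ?_, ?_⟩
  · intro a
    have h1 : twistedAdjoint k H lam 1 a = (twistedAdjoint k H lam).flip a 1 := rfl
    rw [h1, act_flip_cc, conv_apply_one, conv_apply_one, conv_apply_one]
    simp [antipode_one', hl1]
  · intro h a b
    exact LinearMap.congr_fun (key_mul hl1 hl2 a b) h
  · intro h g a
    exact LinearMap.congr_fun (key_act hl2 g a) h

end PartialHopf
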